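/- Let L be a first-order language and consider a predicate extension determined by distinct relation symbols p_0,…,p_{k-1} of arities n_0,…,n_{k-1} and positive formulas F_0,…,F_{k-1}, where the free variables of F_j are among x_{j,0},…,x_{j,n_j-1}. Let I_0 and I_1 be two L-structures on the same domain D which agree on the interpretations of all function symbols and of all relation symbols other than p_0,…,p_{k-1}. If I_0 and I_1 are both models of the predicate extension, then the structure I (agreeing with them except on the p_j) defined by I(p_j) = I_0(p_j) ∩ I_1(p_j) for each j is also a model of the predicate extension. -/
import Mathlib


open FirstOrder Language

/-- A positive formula: one built from atomic formulas using only conjunction,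
disjunction and existential quantification. -/
inductive FirstOrder.Language.BoundedFormula.IsPositive {L : Language} {α : Type*} :
    {n : ℕ} → L.BoundedFormula α n → Prop
  | equal {n : ℕ} (t₁ t₂ : L.Term (α ⊕ Fin n)) : IsPositive (BoundedFormula.equal t₁ t₂)
  | rel {n l : ℕ} (R : L.Relations l) (ts : Fin l → L.Term (α ⊕ Fin n)) :
      IsPositive (BoundedFormula.rel R ts)
  | inf {n : ℕ} {φ ψ : L.BoundedFormula α n} (hφ : IsPositive φ) (hψ : IsPositive ψ) :
      IsPositive (φ ⊓ ψ)
  | sup {n : ℕ} {φ ψ : L.BoundedFormula α n} (hφ : IsPositive φ) (hψ : IsPositive ψ) :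
      IsPositive (φ ⊔ ψ)
  | ex {n : ℕ} {φ : L.BoundedFormula α (n + 1)} (hφ : IsPositive φ) : IsPositive φ.ex

/-- `I` is a model of the predicate extension given by relation symbols `p_j` and formulas
`F_j`: for every `j`, the set of `n_j`-tuples satisfying `F_j` in `I` is contained in the
interpretation of `p_j` in `I`. -/
def IsModelOfExtension (L : Language) (D : Type*) {k : ℕ} {n : Fin k → ℕ}
    (p : ∀ j, L.Relations (n j)) (F : ∀ j, L.BoundedFormula Empty (n j))
    (I : L.Structure D) : Prop :=
  ∀ j, {d : Fin (n j) → D | @BoundedFormula.Realize L D I Empty (n j) (F j) Empty.elim d} ⊆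
    {d : Fin (n j) → D | @Structure.RelMap L D I (n j) (p j) d}

section Aux
variable {L : Language} {D : Type*} {α : Type*}


lemma term_realize_congr (M N : L.Structure D)
    (hfun : ∀ (m : ℕ) (f : L.Functions m) (v : Fin m → D),
      @Structure.funMap L D M m f v = @Structure.funMap L D N m f v)
    (t : L.Term α) (v : α → D) :
    @Term.realize L D M α v t = @Term.realize L D N α v t := by
  induction t with
  | var => rfl
  | func f ts ih => simp only [Term.realize, hfun]; congr 1; funext i; exact ih i

lemma positive_realize_mono (M N : L.Structure D)
    (hfun : ∀ (m : ℕ) (f : L.Functions m) (v : Fin m → D),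
      @Structure.funMap L D M m f v = @Structure.funMap L D N m f v)
    (hrel : ∀ (m : ℕ) (r : L.Relations m) (v : Fin m → D),
      @Structure.RelMap L D M m r v → @Structure.RelMap L D N m r v)
    {n : ℕ} {φ : L.BoundedFormula α n} (hφ : φ.IsPositive) :
    ∀ (xs : α → D) (v : Fin n → D),
      @BoundedFormula.Realize L D M α n φ xs v →
      @BoundedFormula.Realize L D N α n φ xs v := by
  induction hφ with
  | equal t₁ t₂ =>
      intro xs v h
      simp only [BoundedFormula.Realize] at h ⊢
      rw [← term_realize_congr M N hfun, ← term_realize_congr M N hfun]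
      exact h
  | rel R ts =>
      intro xs v h
      simp only [BoundedFormula.Realize] at h ⊢
      have : (fun i => @Term.realize L D N _ (Sum.elim xs v) (ts i)) =
          (fun i => @Term.realize L D M _ (Sum.elim xs v) (ts i)) := by
        funext i; exact (term_realize_congr M N hfun _ _).symm
      rw [this]
      exact hrel _ _ _ h
  | inf _ _ ih₁ ih₂ =>
      intro xs v h
      rw [@BoundedFormula.realize_inf L D M] at h
      rw [@BoundedFormula.realize_inf L D N]
      exact ⟨ih₁ _ _ h.1, ih₂ _ _ h.2⟩
  | sup _ _ ih₁ ih₂ =>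
      intro xs v h
      rw [@BoundedFormula.realize_sup L D M] at h
      rw [@BoundedFormula.realize_sup L D N]
      exact h.imp (ih₁ _ _) (ih₂ _ _)
  | ex _ ih =>
      intro xs v h
      rw [@BoundedFormula.realize_ex L D M] at h
      rw [@BoundedFormula.realize_ex L D N]
      obtain ⟨a, ha⟩ := h
      exact ⟨a, ih _ _ ha⟩

end Aux

/-- If `I₀` and `I₁` are models of a predicate extension on the same domain, agreeing on all
function symbols and on all relation symbols other than the `p_j`, then the structure `I`
agreeing with them except on the `p_j` and interpreting each `p_j` as the intersection
`I₀(p_j) ∩ I₁(p_j)` is also a model of the predicate extension. -/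
theorem isModelOfExtension_inter (L : Language) (D : Type*)
    {k : ℕ} (n : Fin k → ℕ) (p : ∀ j, L.Relations (n j))
    (hp : Function.Injective fun j => (⟨n j, p j⟩ : Σ m, L.Relations m))
    (F : ∀ j, L.BoundedFormula Empty (n j)) (hF : ∀ j, (F j).IsPositive)
    (I₀ I₁ I : L.Structure D)
    (hfun01 : ∀ (m : ℕ) (f : L.Functions m) (v : Fin m → D),
      @Structure.funMap L D I₀ m f v = @Structure.funMap L D I₁ m f v)
    (hrel01 : ∀ (m : ℕ) (r : L.Relations m),
      (∀ j, (⟨m, r⟩ : Σ m, L.Relations m) ≠ ⟨n j, p j⟩) →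
      ∀ v : Fin m → D, (@Structure.RelMap L D I₀ m r v ↔ @Structure.RelMap L D I₁ m r v))
    (hfunI : ∀ (m : ℕ) (f : L.Functions m) (v : Fin m → D),
      @Structure.funMap L D I m f v = @Structure.funMap L D I₀ m f v)
    (hrelI : ∀ (m : ℕ) (r : L.Relations m),
      (∀ j, (⟨m, r⟩ : Σ m, L.Relations m) ≠ ⟨n j, p j⟩) →
      ∀ v : Fin m → D, (@Structure.RelMap L D I m r v ↔ @Structure.RelMap L D I₀ m r v))
    (hpI : ∀ (j : Fin k) (v : Fin (n j) → D),
      @Structure.RelMap L D I (n j) (p j) v ↔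
        @Structure.RelMap L D I₀ (n j) (p j) v ∧ @Structure.RelMap L D I₁ (n j) (p j) v)
    (h0 : IsModelOfExtension L D p F I₀) (h1 : IsModelOfExtension L D p F I₁) :
    IsModelOfExtension L D p F I := by
  intro j d hd
  have toI0 : ∀ (m : ℕ) (r : L.Relations m) (v : Fin m → D),
      @Structure.RelMap L D I m r v → @Structure.RelMap L D I₀ m r v := by
    intro m r v hv
    by_cases hr : ∀ i, (⟨m, r⟩ : Σ m, L.Relations m) ≠ ⟨n i, p i⟩
    · exact (hrelI m r hr v).mp hv
    · push_neg at hr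
      obtain ⟨i, hi⟩ := hr
      obtain ⟨hm, hrp⟩ := Sigma.mk.inj_iff.mp hi
      subst hm
      rw [eq_of_heq hrp] at hv ⊢
      exact ((hpI i v).mp hv).1
  have toI1 : ∀ (m : ℕ) (r : L.Relations m) (v : Fin m → D),
      @Structure.RelMap L D I m r v → @Structure.RelMap L D I₁ m r v := by
    intro m r v hv
    by_cases hr : ∀ i, (⟨m, r⟩ : Σ m, L.Relations m) ≠ ⟨n i, p i⟩
    · exact (hrel01 m r hr v).mp ((hrelI m r hr v).mp hv)
    · push_neg at hr
      obtain ⟨i, hi⟩ := hr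
      obtain ⟨hm, hrp⟩ := Sigma.mk.inj_iff.mp hi
      subst hm
      rw [eq_of_heq hrp] at hv ⊢
      exact ((hpI i v).mp hv).2
  have hfunI1 : ∀ (m : ℕ) (f : L.Functions m) (v : Fin m → D),
      @Structure.funMap L D I m f v = @Structure.funMap L D I₁ m f v := by
    intro m f v; rw [hfunI m f v, hfun01 m f v]
  have h₀ := h0 j (positive_realize_mono I I₀ hfunI toI0 (hF j) Empty.elim d hd)
  have h₁ := h1 j (positive_realize_mono I I₁ hfunI1 toI1 (hF j) Empty.elim d hd)
  exact (hpI j d).mpr ⟨h₀, h₁⟩
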